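/- (Guideline theorem) Let L be any of the modal systems K_nD, D_nD, T_nD, K45_nD, KD45_nD, S5_nD, let P ⊆ 𝒫 be finite, p ∈ P, k ≥ 0, and δ ∈ D^P_k(L). Suppose there exists l ≥ k such that: for every γ ∈ D^P_l(L) with γ^{↑k} = δ and every L-model (M′,s′) of γ^p, there is an L-model (M,s) with M,s ⊨ δ and (M,s) ≅^col_p (M′,s′). Then dforget_L(δ,p) ≡_L ⋁{γ^p : γ ∈ D^P_l(L) and γ^{↑k} = δ}. -/

import Mathlib

/-!
Common framework: multi-agent epistemic modal logic with distributed knowledge.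
Agents are `Fin n`, atoms are natural numbers.
-/

namespace DKLogic

/-- Formulas of the language `L_D`: atoms, negation, conjunction, disjunction and the
distributed-knowledge modality `D_B` for nonempty sets `B` of agents (together with the
constants `⊤`/`⊥`, which the paper uses as the empty conjunction/disjunction). -/
inductive Formula (n : ℕ) : Type
  | top : Formula n
  | bot : Formula n
  | atom : ℕ → Formula n
  | neg : Formula n → Formula n
  | and : Formula n → Formula n → Formula n
  | or : Formula n → Formula n → Formula n
  | D : {B : Finset (Fin n) // B.Nonempty} → Formula n → Formula n

namespace Formula

/-- Modal depth of a formula. -/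
def depth {n : ℕ} : Formula n → ℕ
  | top => 0
  | bot => 0
  | atom _ => 0
  | neg φ => depth φ
  | and φ ψ => max (depth φ) (depth ψ)
  | or φ ψ => max (depth φ) (depth ψ)
  | D _ φ => depth φ + 1

/-- The atoms occurring in a formula. -/
def atoms {n : ℕ} : Formula n → Finset ℕ
  | top => ∅
  | bot => ∅
  | atom q => {q}
  | neg φ => atoms φ
  | and φ ψ => atoms φ ∪ atoms ψ
  | or φ ψ => atoms φ ∪ atoms ψ
  | D _ φ => atoms φ

end Formula

/-- A Kripke model over world type `W` with `n` agents. -/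
structure KModel (n : ℕ) (W : Type) where
  R : Fin n → W → W → Prop
  V : W → Set ℕ

/-- The distributed accessibility relation `R_B = ⋂_{i ∈ B} R_i`. -/
def KModel.RB {n : ℕ} {W : Type} (M : KModel n W) (B : Finset (Fin n)) (s t : W) : Prop :=
  ∀ i ∈ B, M.R i s t

/-- Satisfaction. -/
def Sat {n : ℕ} {W : Type} (M : KModel n W) : W → Formula n → Prop
  | _, .top => True
  | _, .bot => False
  | s, .atom q => q ∈ M.V s
  | s, .neg φ => ¬ Sat M s φ
  | s, .and φ ψ => Sat M s φ ∧ Sat M s ψ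
  | s, .or φ ψ => Sat M s φ ∨ Sat M s ψ
  | s, .D B φ => ∀ t : W, M.RB B.1 s t → Sat M t φ

/-- Seriality of a relation. -/
def Serial {W : Type} (R : W → W → Prop) : Prop := ∀ x, ∃ y, R x y

/-- Euclideanness of a relation. -/
def Euclidean {W : Type} (R : W → W → Prop) : Prop := ∀ x y z, R x y → R x z → R y z

/-- The six modal systems. -/
inductive MSys : Type
  | K | D | T | K45 | KD45 | S5

/-- `L`-models: frame conditions on each accessibility relation for each system. -/
def IsModel {n : ℕ} {W : Type} : MSys → KModel n W → Prop
  | .K, _ => True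
  | .D, M => ∀ i, Serial (M.R i)
  | .T, M => ∀ i, Reflexive (M.R i)
  | .K45, M => ∀ i, Transitive (M.R i) ∧ Euclidean (M.R i)
  | .KD45, M => ∀ i, Serial (M.R i) ∧ Transitive (M.R i) ∧ Euclidean (M.R i)
  | .S5, M => ∀ i, Reflexive (M.R i) ∧ Transitive (M.R i) ∧ Euclidean (M.R i)

/-- Semantic consequence over `L`-models. -/
def Entails {n : ℕ} (L : MSys) (φ ψ : Formula n) : Prop :=
  ∀ (W : Type) (M : KModel n W), IsModel L M → ∀ s : W, Sat M s φ → Sat M s ψ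

/-- Semantic equivalence over `L`-models. -/
def EquivL {n : ℕ} (L : MSys) (φ ψ : Formula n) : Prop :=
  Entails L φ ψ ∧ Entails L ψ φ

/-- `L`-satisfiability. -/
def SatL {n : ℕ} (L : MSys) (φ : Formula n) : Prop :=
  ∃ (W : Type) (M : KModel n W) (s : W), IsModel L M ∧ Sat M s φ

/-- Collective `p`-bisimulation between two pointed models. -/
def CollPBisim {n : ℕ} {W W' : Type} (M : KModel n W) (s : W) (M' : KModel n W') (s' : W')
    (p : ℕ) : Prop :=
  ∃ ρ : W → W' → Prop, ρ s s' ∧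
    ∀ u u', ρ u u' →
      ((∀ q : ℕ, q ≠ p → (q ∈ M.V u ↔ q ∈ M'.V u')) ∧
       (∀ B : Finset (Fin n), B.Nonempty → ∀ v, M.RB B u v → ∃ v', M'.RB B u' v' ∧ ρ v v') ∧
       (∀ B : Finset (Fin n), B.Nonempty → ∀ v', M'.RB B u' v' → ∃ v, M.RB B u v ∧ ρ v v'))

/-- `ψ` is a result of forgetting `p` in `φ` in system `L`
(written `dforget_L(φ,p) ≡_L ψ` in the paper). -/
def IsForget {n : ℕ} (L : MSys) (φ : Formula n) (p : ℕ) (ψ : Formula n) : Prop :=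
  ψ.atoms ⊆ φ.atoms.erase p ∧
  (∀ (W W' : Type) (M : KModel n W) (M' : KModel n W') (s : W) (s' : W'),
      IsModel L M → IsModel L M' → Sat M s φ → CollPBisim M s M' s' p → Sat M' s' ψ) ∧
  (∀ (W' : Type) (M' : KModel n W') (s' : W'),
      IsModel L M' → Sat M' s' ψ →
      ∃ (W : Type) (M : KModel n W) (s : W), IsModel L M ∧ Sat M s φ ∧ CollPBisim M s M' s' p)

/-- `L` is closed under forgetting: `dforget_L(φ,p)` exists (as an `L`-satisfiable formula)
for every `L`-satisfiable `φ` and every atom `p`. -/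
def ClosedUnderForgetting {n : ℕ} (L : MSys) : Prop :=
  ∀ (φ : Formula n) (p : ℕ), SatL L φ → ∃ ψ : Formula n, SatL L ψ ∧ IsForget L φ p ψ

/-- `ψ` is a uniform interpolant of `φ` in `L` over `P \ {p}`. -/
def IsUI {n : ℕ} (L : MSys) (P : Finset ℕ) (p : ℕ) (φ ψ : Formula n) : Prop :=
  SatL L ψ ∧ ψ.atoms ⊆ P.erase p ∧
  ∀ χ : Formula n, p ∉ χ.atoms → (Entails L φ χ ↔ Entails L ψ χ)

/-- The uniform interpolation property for the system `L`. -/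
def HasUIP {n : ℕ} (L : MSys) : Prop :=
  ∀ (P : Finset ℕ) (p : ℕ) (φ : Formula n),
    p ∈ P → φ.atoms ⊆ P → SatL L φ → ∃ ψ : Formula n, IsUI L P p φ ψ

/-! ### Canonical formulas -/

/-- Big conjunction of a list of formulas (`⊤` for the empty list). -/
def bigAnd {n : ℕ} : List (Formula n) → Formula n
  | [] => .top
  | φ :: l => .and φ (bigAnd l)

/-- Big disjunction of a list of formulas (`⊥` for the empty list). -/
def bigOr {n : ℕ} : List (Formula n) → Formula n
  | [] => .bot
  | φ :: l => .or φ (bigOr l)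

/-- An injective numerical code of formulas, used to fix a canonical ordering. -/
def fcode {n : ℕ} : Formula n → ℕ
  | .top => Nat.pair 0 0
  | .bot => Nat.pair 1 0
  | .atom q => Nat.pair 2 q
  | .neg φ => Nat.pair 3 (fcode φ)
  | .and φ ψ => Nat.pair 4 (Nat.pair (fcode φ) (fcode ψ))
  | .or φ ψ => Nat.pair 5 (Nat.pair (fcode φ) (fcode ψ))
  | .D B φ => Nat.pair 6 (Nat.pair (B.1.sum fun i => 2 ^ (i : ℕ)) (fcode φ))

/-- Insert a formula into a strictly `fcode`-sorted list (dropping duplicates). -/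
def insertF {n : ℕ} (φ : Formula n) : List (Formula n) → List (Formula n)
  | [] => [φ]
  | ψ :: l =>
      if fcode φ < fcode ψ then φ :: ψ :: l
      else if fcode φ = fcode ψ then ψ :: l
      else ψ :: insertF φ l

/-- The canonical (sorted, duplicate-free) list representing the set of formulas in `l`. -/
def normList {n : ℕ} (l : List (Formula n)) : List (Formula n) := l.foldr insertF []

/-- The minterm of `P` that is positive exactly on `S`. -/
def minterm {n : ℕ} (P S : Finset ℕ) : Formula n :=
  bigAnd ((P.sort (· ≤ ·)).map fun q =>
    if q ∈ S then Formula.atom q else Formula.neg (Formula.atom q))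

/-- The subset of `Fin n` whose characteristic bits are those of `m`. -/
def natToFinset (n m : ℕ) : Finset (Fin n) :=
  Finset.univ.filter fun i => m.testBit (i : ℕ)

/-- A canonical enumeration of all nonempty subsets of the agent set. -/
def neSubsets (n : ℕ) : List {B : Finset (Fin n) // B.Nonempty} :=
  ((List.range (2 ^ n)).map (natToFinset n)).filterMap fun B =>
    if h : B.Nonempty then some ⟨B, h⟩ else none

/-- `∇_B Φ = D_B (⋁Φ) ∧ ⋀_{φ ∈ Φ} ¬ D_B ¬ φ`. -/
def nabla {n : ℕ} (B : {B : Finset (Fin n) // B.Nonempty}) (Φ : List (Formula n)) : Formula n :=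
  Formula.and (Formula.D B (bigOr Φ))
    (bigAnd (Φ.map fun φ => Formula.neg (Formula.D B (Formula.neg φ))))

/-- Underlying data of a d-canonical formula: a set of (positive) atoms together with,
for every set `B` of agents, a list of successor data. -/
inductive CData (n : ℕ) : Type
  | mk (S : Finset ℕ) (succ : Finset (Fin n) → List (CData n)) : CData n

/-- The positive-atom component. -/
def CData.S {n : ℕ} : CData n → Finset ℕ
  | mk S _ => S

/-- The `B`-successor data. -/
def CData.succ {n : ℕ} : CData n → Finset (Fin n) → List (CData n)
  | mk _ f => f

/-- The d-canonical formula of depth `k` over `P` determined by the data `d`: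
`δ_0 ∧ ⋀_{B} ∇_B Φ_B`. -/
def toFormula {n : ℕ} (P : Finset ℕ) : ℕ → CData n → Formula n
  | 0, d => minterm P (d.S ∩ P)
  | (k+1), d =>
      Formula.and (minterm P (d.S ∩ P))
        (bigAnd ((neSubsets n).map fun B =>
          nabla B (normList ((d.succ B.1).map fun c => toFormula P k c))))

/-- `D^P_k`: the set of d-canonical formulas of depth `k` over `P`. -/
def DP {n : ℕ} (P : Finset ℕ) (k : ℕ) : Set (Formula n) := Set.range (toFormula P k)

/-- `R_B(δ)` for `δ` the level-`k` canonical formula with data `d`: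
the set of `B`-successor canonical formulas (of level `k - 1`). -/
def RBset {n : ℕ} (P : Finset ℕ) (k : ℕ) (d : CData n) (B : Finset (Fin n)) :
    Set (Formula n) :=
  {φ | ∃ c ∈ d.succ B, φ = toFormula P (k - 1) c}

/-- One pruning step `δ ↦ δ^↓` on data (first argument: the level of the input). -/
def downD {n : ℕ} : ℕ → CData n → CData n
  | 0, d => d
  | 1, d => CData.mk d.S (fun _ => [])
  | (k+2), d => CData.mk d.S (fun B => (d.succ B).map fun c => downD (k+1) c)

/-- `l`-fold pruning `δ ↦ δ^{↓l}` on data (first argument: the level of the input). -/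
def downIter {n : ℕ} : ℕ → ℕ → CData n → CData n
  | _, 0, d => d
  | k, (l+1), d => downIter (k-1) l (downD k d)

/-- Truncation `δ ↦ δ^{↑l}` on data (first argument: the level of the input). -/
def upD {n : ℕ} : ℕ → ℕ → CData n → CData n
  | _, 0, d => CData.mk d.S (fun _ => [])
  | 0, (_+1), d => d
  | (k+1), (l+1), d => CData.mk d.S (fun B => (d.succ B).map fun c => upD k l c)

/-- The canonical formula `δ` of level `k` with data `d`. -/
def cf {n : ℕ} (P : Finset ℕ) (k : ℕ) (d : CData n) : Formula n := toFormula P k d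

/-- `δ^{↓l}` (a canonical formula of level `k - l`). -/
def cfDown {n : ℕ} (P : Finset ℕ) (k l : ℕ) (d : CData n) : Formula n :=
  toFormula P (k - l) (downIter k l d)

/-- `δ^{↑l}` (a canonical formula of level `min k l`). -/
def cfUp {n : ℕ} (P : Finset ℕ) (k l : ℕ) (d : CData n) : Formula n :=
  toFormula P (min k l) (upD k l d)

/-- Literal elimination: `φ^p` replaces every occurrence of `¬p` by `⊤` and subsequently
every remaining occurrence of `p` by `⊤`. -/
def elim {n : ℕ} (p : ℕ) : Formula n → Formula n
  | .top => .top
  | .bot => .bot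
  | .atom q => if q = p then .top else .atom q
  | .neg (.atom q) => if q = p then .top else .neg (.atom q)
  | .neg φ => .neg (elim p φ)
  | .and φ ψ => .and (elim p φ) (elim p ψ)
  | .or φ ψ => .or (elim p φ) (elim p ψ)
  | .D B φ => .D B (elim p φ)

/-!
Forth: every pointed model satisfies some canonical formula `γ` of each depth `l` (there are
only finitely many of them, so the successor lists can be read off the model), and two canonical
formulas of the same depth true at one world coincide; hence the `k`-truncation of `γ` is `δ`.
Literal elimination only weakens a canonical formula, because its negations stand in front of
literals or of `D_B ¬η` with `η` canonical, so `γ^p` holds as well; being `p`-free, it is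
preserved by collective `p`-bisimulations. Back is the hypothesis of the theorem.
-/

section Semantics

variable {n : ℕ} {W : Type} (M : KModel n W) (t : W)

theorem sat_bigAnd (l : List (Formula n)) : Sat M t (bigAnd l) ↔ ∀ φ ∈ l, Sat M t φ := by
  induction l with
  | nil => simp [bigAnd, Sat]
  | cons φ l ih => simp [bigAnd, Sat, ih]

theorem sat_bigOr (l : List (Formula n)) : Sat M t (bigOr l) ↔ ∃ φ ∈ l, Sat M t φ := by
  induction l with
  | nil => simp [bigOr, Sat]
  | cons φ l ih => simp [bigOr, Sat, ih]

theorem sat_nabla (B : {B : Finset (Fin n) // B.Nonempty}) (Φ : List (Formula n)) :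
    Sat M t (nabla B Φ) ↔
      (∀ v, M.RB B.1 t v → ∃ φ ∈ Φ, Sat M v φ) ∧ ∀ φ ∈ Φ, ∃ v, M.RB B.1 t v ∧ Sat M v φ := by
  simp [nabla, Sat, sat_bigAnd, sat_bigOr]

theorem sat_minterm (P S : Finset ℕ) :
    Sat M t (minterm (n := n) P S) ↔ ∀ q ∈ P, (q ∈ S ↔ q ∈ M.V t) := by
  simp only [minterm, sat_bigAnd, List.forall_mem_map, Finset.mem_sort]
  refine forall₂_congr fun q _ => ?_
  by_cases hq : q ∈ S <;> simp [hq, Sat]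

theorem sat_minterm_inter (P S : Finset ℕ) :
    Sat M t (minterm (n := n) P (S ∩ P)) ↔ ∀ q ∈ P, (q ∈ S ↔ q ∈ M.V t) := by
  simp +contextual [sat_minterm]

theorem sat_nabla_map {B : {B : Finset (Fin n) // B.Nonempty}} {Φ : List (Formula n)}
    (f : Formula n → Formula n) (hf : ∀ v, ∀ φ ∈ Φ, Sat M v φ → Sat M v (f φ))
    (h : Sat M t (nabla B Φ)) : Sat M t (nabla B (Φ.map f)) := by
  rw [sat_nabla] at h ⊢
  refine ⟨fun v hv => ?_, fun φ hφ => ?_⟩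
  · obtain ⟨φ, hφ, hv'⟩ := h.1 v hv
    exact ⟨f φ, List.mem_map_of_mem hφ, hf v φ hφ hv'⟩
  · obtain ⟨ψ, hψ, rfl⟩ := List.mem_map.1 hφ
    obtain ⟨v, hv, hv'⟩ := h.2 ψ hψ
    exact ⟨v, hv, hf v ψ hψ hv'⟩

end Semantics

section Atoms

variable {n : ℕ} {q : ℕ}

theorem mem_atoms_bigAnd (l : List (Formula n)) :
    q ∈ (bigAnd l).atoms ↔ ∃ φ ∈ l, q ∈ φ.atoms := by
  induction l with
  | nil => simp [bigAnd, Formula.atoms]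
  | cons φ l ih => simp [bigAnd, Formula.atoms, ih]

theorem mem_atoms_bigOr (l : List (Formula n)) :
    q ∈ (bigOr l).atoms ↔ ∃ φ ∈ l, q ∈ φ.atoms := by
  induction l with
  | nil => simp [bigOr, Formula.atoms]
  | cons φ l ih => simp [bigOr, Formula.atoms, ih]

theorem mem_atoms_nabla (B : {B : Finset (Fin n) // B.Nonempty}) (Φ : List (Formula n)) :
    q ∈ (nabla B Φ).atoms ↔ ∃ φ ∈ Φ, q ∈ φ.atoms := by
  simp [nabla, Formula.atoms, mem_atoms_bigAnd, mem_atoms_bigOr]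

theorem atoms_minterm (P S : Finset ℕ) : (minterm (n := n) P S).atoms = P := by
  ext q
  simp only [minterm, mem_atoms_bigAnd, List.mem_map, Finset.mem_sort]
  constructor
  · rintro ⟨_, ⟨r, hr, rfl⟩, hq⟩
    split_ifs at hq <;> simp_all [Formula.atoms]
  · exact fun hq => ⟨_, ⟨q, hq, rfl⟩, by split_ifs <;> simp [Formula.atoms]⟩

theorem atoms_elim_subset (p : ℕ) (φ : Formula n) : (elim p φ).atoms ⊆ φ.atoms.erase p := by
  fun_induction elim p φ <;> grind [Formula.atoms]

end Atoms

section LiteralElimination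

variable {n : ℕ} (p : ℕ)

theorem elim_neg_of_ne_atom {φ : Formula n} (h : ∀ q, φ ≠ .atom q) :
    elim p (.neg φ) = .neg (elim p φ) := by
  cases φ <;> first | rfl | exact absurd rfl (h _)

theorem elim_bigAnd (l : List (Formula n)) : elim p (bigAnd l) = bigAnd (l.map (elim p)) := by
  induction l with
  | nil => rfl
  | cons φ l ih => simp [bigAnd, elim, ih]

theorem elim_bigOr (l : List (Formula n)) : elim p (bigOr l) = bigOr (l.map (elim p)) := by
  induction l with
  | nil => rfl
  | cons φ l ih => simp [bigOr, elim, ih]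

theorem elim_nabla (B : {B : Finset (Fin n) // B.Nonempty}) {Φ : List (Formula n)}
    (hΦ : ∀ φ ∈ Φ, ∀ q, φ ≠ .atom q) : elim p (nabla B Φ) = nabla B (Φ.map (elim p)) := by
  simp only [nabla, elim, elim_bigOr, elim_bigAnd, List.map_map]
  congr 2
  refine List.map_congr_left fun φ hφ => ?_
  simp only [Function.comp, elim_neg_of_ne_atom p (hΦ φ hφ), elim]

theorem bigAnd_ne_atom (l : List (Formula n)) (q : ℕ) : bigAnd l ≠ .atom q := by
  cases l <;> simp [bigAnd]

theorem sat_elim_minterm {W : Type} {M : KModel n W} {t : W} {P S : Finset ℕ}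
    (h : Sat M t (minterm (n := n) P S)) : Sat M t (elim p (minterm P S)) := by
  rw [minterm, sat_bigAnd] at h
  rw [minterm, elim_bigAnd, sat_bigAnd, List.forall_mem_map]
  intro φ hφ
  obtain ⟨q, -, rfl⟩ := List.mem_map.1 hφ
  have hq := h _ hφ
  by_cases hqp : q = p <;> split_ifs at hq ⊢ <;> simp_all [elim, Sat]

end LiteralElimination

theorem CollPBisim.sat_iff {n : ℕ} {W W' : Type} {M : KModel n W} {M' : KModel n W'} {s : W}
    {s' : W'} {p : ℕ} (h : CollPBisim M s M' s' p) {φ : Formula n} (hφ : p ∉ φ.atoms) :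
    Sat M s φ ↔ Sat M' s' φ := by
  obtain ⟨ρ, hss', hρ⟩ := h
  induction φ generalizing s s' with
  | top | bot => simp [Sat]
  | atom q => exact (hρ s s' hss').1 q (by simpa [Formula.atoms, eq_comm] using hφ)
  | neg φ ih => exact not_congr (ih hφ hss')
  | and φ ψ ihφ ihψ =>
    simp only [Formula.atoms, Finset.mem_union, not_or] at hφ
    exact and_congr (ihφ hφ.1 hss') (ihψ hφ.2 hss')
  | or φ ψ ihφ ihψ =>
    simp only [Formula.atoms, Finset.mem_union, not_or] at hφ
    exact or_congr (ihφ hφ.1 hss') (ihψ hφ.2 hss')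
  | D B φ ih =>
    refine ⟨fun hs v' hv' => ?_, fun hs' v hv => ?_⟩
    · obtain ⟨v, hv, hvv'⟩ := (hρ s s' hss').2.2 B.1 B.2 v' hv'
      exact (ih hφ hvv').1 (hs v hv)
    · obtain ⟨v', hv', hvv'⟩ := (hρ s s' hss').2.1 B.1 B.2 v hv
      exact (ih hφ hvv').2 (hs' v' hv')

section CanonicalOrder

variable {n : ℕ}

theorem fcode_injective : Function.Injective (fcode (n := n)) := by
  intro φ
  induction φ with
  | top | bot | atom => intro ψ h; cases ψ <;> simp_all [fcode, Nat.pair_eq_pair]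
  | neg φ ih => intro ψ h; cases ψ <;> simp [fcode, Nat.pair_eq_pair] at h; rw [ih h]
  | and φ₁ φ₂ ih₁ ih₂ | or φ₁ φ₂ ih₁ ih₂ =>
    intro ψ h; cases ψ <;> simp [fcode, Nat.pair_eq_pair] at h; rw [ih₁ h.1, ih₂ h.2]
  | D B φ ih =>
    intro ψ h
    cases ψ <;> simp [fcode, Nat.pair_eq_pair] at h
    obtain ⟨hB, hφ⟩ := h
    have sum_val (C : Finset (Fin n)) :
        ∑ i ∈ C, 2 ^ (i : ℕ) = ∑ i ∈ C.map Fin.valEmbedding, 2 ^ i := by simp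
    rw [sum_val, sum_val] at hB
    rw [ih hφ, Subtype.ext (Finset.map_injective _ (Finset.geomSum_injective le_rfl hB))]

theorem mem_insertF {a φ : Formula n} {l : List (Formula n)} :
    a ∈ insertF φ l ↔ a = φ ∨ a ∈ l := by
  induction l with
  | nil => simp [insertF]
  | cons ψ l ih =>
    simp only [insertF]
    split_ifs with h₁ h₂
    · simp
    · simp [fcode_injective h₂]
    · simp only [List.mem_cons, ih]
      tauto

theorem pairwise_insertF {φ : Formula n} {l : List (Formula n)}
    (hl : l.Pairwise (fcode · < fcode ·)) : (insertF φ l).Pairwise (fcode · < fcode ·) := by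
  induction l with
  | nil => simp [insertF]
  | cons ψ l ih =>
    rw [List.pairwise_cons] at hl
    simp only [insertF]
    split_ifs with h₁ h₂
    · exact List.pairwise_cons.2 ⟨by simpa using ⟨h₁, fun b hb => h₁.trans (hl.1 b hb)⟩,
        List.pairwise_cons.2 hl⟩
    · exact List.pairwise_cons.2 hl
    · refine List.pairwise_cons.2 ⟨fun b hb => ?_, ih hl.2⟩
      rcases mem_insertF.1 hb with rfl | hb
      · omega
      · exact hl.1 b hb

theorem mem_normList {a : Formula n} {l : List (Formula n)} : a ∈ normList l ↔ a ∈ l := by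
  induction l with
  | nil => simp [normList]
  | cons φ l ih =>
    show a ∈ insertF φ (normList l) ↔ _
    rw [mem_insertF, ih, List.mem_cons]

theorem pairwise_normList (l : List (Formula n)) :
    (normList l).Pairwise (fcode · < fcode ·) := by
  induction l with
  | nil => simp [normList]
  | cons φ l ih => exact pairwise_insertF ih

theorem normList_congr {l₁ l₂ : List (Formula n)} (h : ∀ a, a ∈ l₁ ↔ a ∈ l₂) :
    normList l₁ = normList l₂ := by
  have nodup (l : List (Formula n)) : (normList l).Nodup := 
    (pairwise_normList l).imp fun h => ne_of_apply_ne fcode h.ne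
  refine List.Perm.eq_of_pairwise (fun a b _ _ hab hba => absurd (hab.trans hba) (lt_irrefl _))
    (pairwise_normList l₁) (pairwise_normList l₂) ?_
  exact (List.perm_ext_iff_of_nodup (nodup l₁) (nodup l₂)).2 fun a => by
    simp only [mem_normList, h]

end CanonicalOrder

theorem exists_list_representatives {α β : Type*} {g : α → β} {S : Set α}
    (h : (g '' S).Finite) : ∃ L : List α, (∀ x ∈ L, x ∈ S) ∧ ∀ x ∈ S, ∃ y ∈ L, g y = g x := by
  obtain ⟨T, hTS, hT⟩ := S.exists_subset_bijOn g
  have hTfin : T.Finite := .of_finite_image (hT.image_eq ▸ h) hT.injOn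
  refine ⟨hTfin.toFinset.toList, fun x hx => hTS (by simpa using hx), fun x hx => ?_⟩
  obtain ⟨y, hy, hyx⟩ := hT.surjOn ⟨x, hx, rfl⟩
  exact ⟨y, by simpa using hy, hyx⟩

section CanonicalFormulas

variable {n : ℕ} {W : Type} (P : Finset ℕ)

theorem sat_toFormula_zero {M : KModel n W} {t : W} {d : CData n} :
    Sat M t (toFormula P 0 d) ↔ ∀ q ∈ P, (q ∈ d.S ↔ q ∈ M.V t) :=
  sat_minterm_inter M t P d.S

theorem sat_toFormula_succ {M : KModel n W} {t : W} {k : ℕ} {d : CData n} :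
    Sat M t (toFormula P (k + 1) d) ↔ (∀ q ∈ P, (q ∈ d.S ↔ q ∈ M.V t)) ∧
      ∀ B ∈ neSubsets n,
        (∀ v, M.RB B.1 t v → ∃ c ∈ d.succ B.1, Sat M v (toFormula P k c)) ∧
        ∀ c ∈ d.succ B.1, ∃ v, M.RB B.1 t v ∧ Sat M v (toFormula P k c) := by
  rw [toFormula, Sat, sat_bigAnd, List.forall_mem_map]
  simp only [sat_minterm_inter, sat_nabla, mem_normList, List.mem_map,
    exists_exists_and_eq_and, forall_exists_index, and_imp, forall_apply_eq_imp_iff₂]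

theorem atoms_toFormula (k : ℕ) (d : CData n) : (toFormula P k d).atoms = P := by
  induction k generalizing d with
  | zero => exact atoms_minterm P _
  | succ k ih =>
    ext q
    simp +contextual [toFormula, Formula.atoms, atoms_minterm, mem_atoms_bigAnd, mem_atoms_nabla,
      mem_normList, ih]

theorem toFormula_ne_atom (k : ℕ) (d : CData n) (q : ℕ) : toFormula P k d ≠ .atom q := by
  cases k <;> simp [toFormula, minterm, bigAnd_ne_atom]

theorem minterm_inter_eq_of_sat {M : KModel n W} {t : W} {S S' : Finset ℕ}
    (h : ∀ q ∈ P, (q ∈ S ↔ q ∈ M.V t)) (h' : ∀ q ∈ P, (q ∈ S' ↔ q ∈ M.V t)) :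
    minterm (n := n) P (S ∩ P) = minterm P (S' ∩ P) := by
  congr 1
  ext q
  by_cases hq : q ∈ P <;> simp [hq, h, h']

theorem toFormula_eq_of_sat {M : KModel n W} {t : W} {k : ℕ} {d d' : CData n}
    (h : Sat M t (toFormula P k d)) (h' : Sat M t (toFormula P k d')) :
    toFormula P k d = toFormula P k d' := by
  induction k generalizing d d' t with
  | zero =>
    rw [sat_toFormula_zero] at h h'
    exact minterm_inter_eq_of_sat P h h'
  | succ k ih =>
    have covered {d d' : CData n} (h : Sat M t (toFormula P (k + 1) d))
        (h' : Sat M t (toFormula P (k + 1) d')) (B) (hB : B ∈ neSubsets n) :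
        ∀ φ ∈ (d.succ B.1).map (toFormula P k), φ ∈ (d'.succ B.1).map (toFormula P k) := by
      simp only [List.forall_mem_map]
      intro c hc
      obtain ⟨v, hv, hvc⟩ := ((sat_toFormula_succ P).1 h).2 B hB |>.2 c hc
      obtain ⟨c', hc', hvc'⟩ := ((sat_toFormula_succ P).1 h').2 B hB |>.1 v hv
      exact List.mem_map.2 ⟨c', hc', ih hvc' hvc⟩
    simp only [toFormula]
    congr 1
    · exact minterm_inter_eq_of_sat P ((sat_toFormula_succ P).1 h).1 ((sat_toFormula_succ P).1 h').1
    exact congrArg bigAnd <| List.map_congr_left fun B hB => congrArg _ <|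
      normList_congr fun φ => ⟨covered h h' B hB φ, covered h' h B hB φ⟩

open Classical in
theorem finite_range_toFormula (k : ℕ) : (Set.range (toFormula (n := n) P k)).Finite := by
  induction k with
  | zero =>
    refine (P.powerset.finite_toSet.image (minterm P)).subset ?_
    rintro _ ⟨d, rfl⟩
    exact ⟨d.S ∩ P, by simp, rfl⟩
  | succ k ih =>
    -- a formula of depth `k + 1` is determined by its minterm and, for each `B`,
    -- the set of its `B`-successor formulas
    let G (x : Finset ℕ × (Finset (Fin n) → Finset (Formula n))) : Formula n :=
      .and (minterm P x.1) (bigAnd ((neSubsets n).map fun B => nabla B (normList (x.2 B.1).toList)))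
    refine ((P.powerset.finite_toSet.prod
      (Set.Finite.pi' fun _ => ih.toFinset.powerset.finite_toSet)).image G).subset ?_
    rintro _ ⟨d, rfl⟩
    refine ⟨(d.S ∩ P, fun B => ((d.succ B).map (toFormula P k)).toFinset),
      ⟨by simp, fun B => ?_⟩, ?_⟩
    · rw [Finset.mem_coe, Finset.mem_powerset]
      intro φ hφ
      obtain ⟨c, -, rfl⟩ := List.mem_map.1 (List.mem_toFinset.1 hφ)
      exact ih.mem_toFinset.2 (Set.mem_range_self c)
    · simp only [G, toFormula]
      congr 1
      exact congrArg bigAnd <| List.map_congr_left fun B _ => congrArg _ <| normList_congr (by simp)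

theorem exists_sat_toFormula (M : KModel n W) (k : ℕ) (t : W) :
    ∃ d, Sat M t (toFormula P k d) := by
  classical
  induction k generalizing t with
  | zero =>
    exact ⟨.mk (P.filter (· ∈ M.V t)) fun _ => [],
      (sat_toFormula_zero P).2 (by simp +contextual [CData.S])⟩
  | succ k ih =>
    choose f hf using ih
    have hfin (B : Finset (Fin n)) : ((fun v => toFormula P k (f v)) '' {v | M.RB B t v}).Finite :=
      (finite_range_toFormula P k).subset (Set.image_subset_iff.2 fun v _ => Set.mem_range_self _)
    choose L hLS hLcov using fun B => exists_list_representatives (hfin B)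
    refine ⟨.mk (P.filter (· ∈ M.V t)) fun B => (L B).map f, (sat_toFormula_succ P).2
      ⟨by simp +contextual [CData.S], fun B _ => ⟨fun v hv => ?_, fun c hc => ?_⟩⟩⟩
    · obtain ⟨y, hy, hyv⟩ := hLcov B.1 v hv
      exact ⟨f y, List.mem_map_of_mem hy, hyv ▸ hf v⟩
    · obtain ⟨y, hy, rfl⟩ := List.mem_map.1 hc
      exact ⟨y, hLS B.1 y hy, hf y⟩

theorem sat_cfUp {M : KModel n W} {t : W} {l k : ℕ} {e : CData n}
    (h : Sat M t (toFormula P l e)) : Sat M t (cfUp P l k e) := by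
  induction l generalizing k e t with
  | zero => cases k <;> simpa [cfUp, upD, toFormula, CData.S] using h
  | succ l ih =>
    cases k with
    | zero => exact (sat_toFormula_zero P).2 ((sat_toFormula_succ P).1 h).1
    | succ k =>
      rw [cfUp, Nat.succ_min_succ, sat_toFormula_succ]
      rw [sat_toFormula_succ] at h
      refine ⟨h.1, fun B hB => ⟨fun v hv => ?_, fun c hc => ?_⟩⟩
      · obtain ⟨c, hc, hvc⟩ := (h.2 B hB).1 v hv
        exact ⟨upD l k c, List.mem_map_of_mem hc, ih hvc⟩
      · obtain ⟨c, hc', rfl⟩ := List.mem_map.1 (show c ∈ (e.succ B.1).map (upD l k) from hc)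
        obtain ⟨v, hv, hvc⟩ := (h.2 B hB).2 c hc'
        exact ⟨v, hv, ih hvc⟩

theorem sat_elim_toFormula (p : ℕ) {M : KModel n W} {t : W} {k : ℕ} {d : CData n}
    (h : Sat M t (toFormula P k d)) : Sat M t (elim p (toFormula P k d)) := by
  induction k generalizing d t with
  | zero => exact sat_elim_minterm p h
  | succ k ih =>
    simp only [toFormula, elim, Sat, sat_bigAnd, List.forall_mem_map] at h ⊢
    refine ⟨sat_elim_minterm p h.1, ?_⟩
    rw [elim_bigAnd, List.map_map, sat_bigAnd, List.forall_mem_map]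
    intro B hB
    have canonical {φ} (hφ : φ ∈ normList ((d.succ B.1).map (toFormula P k))) :
        ∃ c, φ = toFormula P k c := by
      obtain ⟨c, -, rfl⟩ := List.mem_map.1 (mem_normList.1 hφ)
      exact ⟨c, rfl⟩
    rw [Function.comp_apply, elim_nabla p B fun φ hφ q => by
      obtain ⟨c, rfl⟩ := canonical hφ
      exact toFormula_ne_atom P k c q]
    refine sat_nabla_map M t (elim p) (fun v φ hφ hv => ?_) (h.2 B hB)
    obtain ⟨c, rfl⟩ := canonical hφ
    exact ih hv

end CanonicalFormulas

theorem forgetting_guideline_general {n : ℕ} (L : MSys) (P : Finset ℕ) (p : ℕ)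
    (k : ℕ) (d : CData n)
    (l : ℕ) (hl : k ≤ l)
    (H : ∀ e : CData n, SatL L (cf P l e) → cfUp P l k e = cf P k d →
      ∀ (W' : Type) (M' : KModel n W') (s' : W'), IsModel L M' →
        Sat M' s' (elim p (cf P l e)) →
        ∃ (W : Type) (M : KModel n W) (s : W),
          IsModel L M ∧ Sat M s (cf P k d) ∧ CollPBisim M s M' s' p) :
    ∀ Γ : List (Formula n),
      (∀ γ : Formula n,
        γ ∈ Γ ↔ ∃ e : CData n, γ = cf P l e ∧ SatL L γ ∧ cfUp P l k e = cf P k d) →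
      IsForget L (cf P k d) p (bigOr (Γ.map (elim p))) := by
  intro Γ hΓ
  refine ⟨fun q hq => ?_, fun W W' M M' s s' hM _ hs hbisim => ?_, fun W' M' s' hM' hs' => ?_⟩
  · obtain ⟨_, hψ, hq⟩ := (mem_atoms_bigOr _).1 hq
    obtain ⟨γ, hγ, rfl⟩ := List.mem_map.1 hψ
    obtain ⟨e, rfl, -, -⟩ := (hΓ γ).1 hγ
    have := atoms_elim_subset p _ hq
    rwa [cf, atoms_toFormula] at this ⊢
  · obtain ⟨e, he⟩ := exists_sat_toFormula P M l s
    have hup : cfUp P l k e = cf P k d := by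
      have := sat_cfUp P (k := k) he
      rw [cfUp, min_eq_right hl] at this ⊢
      exact toFormula_eq_of_sat P this hs
    have hΓe : cf P l e ∈ Γ := (hΓ _).2 ⟨e, rfl, ⟨W, M, s, hM, he⟩, hup⟩
    have hfree : p ∉ (elim p (cf P l e)).atoms := fun h =>
      (Finset.mem_erase.1 (atoms_elim_subset p _ h)).1 rfl
    exact (sat_bigOr M' s' _).2
      ⟨_, List.mem_map_of_mem hΓe, (hbisim.sat_iff hfree).1 (sat_elim_toFormula P p he)⟩
  · obtain ⟨_, hψ, hs'⟩ := (sat_bigOr M' s' _).1 hs'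
    obtain ⟨γ, hγ, rfl⟩ := List.mem_map.1 hψ
    obtain ⟨e, rfl, hsat, hup⟩ := (hΓ γ).1 hγ
    exact H e hsat hup W' M' s' hM' hs'

/-- the guideline theorem for constructing results of forgetting. -/
theorem forgetting_guideline {n : ℕ} (L : MSys) (P : Finset ℕ) (p : ℕ) (hp : p ∈ P)
    (k : ℕ) (d : CData n) (hsat : SatL L (cf P k d))
    (l : ℕ) (hl : k ≤ l)
    (H : ∀ e : CData n, SatL L (cf P l e) → cfUp P l k e = cf P k d →
      ∀ (W' : Type) (M' : KModel n W') (s' : W'), IsModel L M' →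
        Sat M' s' (elim p (cf P l e)) →
        ∃ (W : Type) (M : KModel n W) (s : W),
          IsModel L M ∧ Sat M s (cf P k d) ∧ CollPBisim M s M' s' p) :
    ∀ Γ : List (Formula n),
      (∀ γ : Formula n,
        γ ∈ Γ ↔ ∃ e : CData n, γ = cf P l e ∧ SatL L γ ∧ cfUp P l k e = cf P k d) →
      IsForget L (cf P k d) p (bigOr (Γ.map (elim p))) :=
  forgetting_guideline_general L P p k d l hl H

end DKLogic
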